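/- Let G and G' be finite simple graphs, each containing at least one edge. Then Z(G □ G') ≥ Z(G) + Z(G'). -/
import Mathlib

open Finset

/-- A fort of a graph: a nonempty (finite) set of vertices `F` such that no vertex
outside `F` has exactly one neighbor in `F`. -/
def IsFort {V : Type*} (G : SimpleGraph V) (F : Finset V) : Prop :=
  F.Nonempty ∧ ∀ v ∉ F, ¬ ∃! u, u ∈ F ∧ G.Adj v u

/-- The fort number: the maximum cardinality of a collection of pairwise disjoint forts. -/
noncomputable def fortNumber {V : Type*} (G : SimpleGraph V) : ℕ :=
  sSup {k | ∃ 𝒞 : Finset (Finset V), (∀ F ∈ 𝒞, IsFort G F) ∧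
    (↑𝒞 : Set (Finset V)).Pairwise Disjoint ∧ 𝒞.card = k}

/-- The fractional zero forcing number. -/
noncomputable def fracZ {V : Type*} [Fintype V] (G : SimpleGraph V) : ℝ :=
  sInf {x : ℝ | ∃ ω : V → ℝ, (∀ v, 0 ≤ ω v) ∧
    (∀ F : Finset V, IsFort G F → 1 ≤ ∑ v ∈ F, ω v) ∧ x = ∑ v, ω v}

/-- The set of vertices eventually filled by the zero forcing process started at `S`. -/
inductive ZFForced {V : Type*} (G : SimpleGraph V) (S : Set V) : V → Prop
  | init (v : V) : v ∈ S → ZFForced G S v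
  | force (u w : V) : G.Adj u w → ZFForced G S u →
      (∀ x, G.Adj u x → x ≠ w → ZFForced G S x) → ZFForced G S w

/-- A zero forcing set: starting from `S`, every vertex is eventually filled. -/
def IsZeroForcingSet {V : Type*} (G : SimpleGraph V) (S : Set V) : Prop :=
  ∀ v, ZFForced G S v

/-- The zero forcing number: minimum cardinality of a zero forcing set. -/
noncomputable def zfNumber {V : Type*} (G : SimpleGraph V) : ℕ :=
  sInf {k | ∃ S : Finset V, IsZeroForcingSet G ↑S ∧ S.card = k}

section Aux

variable {V : Type*} {V' : Type*}

lemma zf_mono {G : SimpleGraph V} {S S' : Set V} (h : S ⊆ S') {v : V}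
    (hv : ZFForced G S v) : ZFForced G S' v := by
  induction hv with
  | init v hv => exact ZFForced.init v (h hv)
  | force u w hadj hu hall ihu ihall => exact ZFForced.force u w hadj ihu ihall

lemma zf_trans {G : SimpleGraph V} {S S' : Set V} (h : ∀ w ∈ S', ZFForced G S w) {v : V}
    (hv : ZFForced G S' v) : ZFForced G S v := by
  induction hv with
  | init v hv => exact h v hv
  | force u w hadj hu hall ihu ihall => exact ZFForced.force u w hadj ihu ihall

lemma zf_no_isolated {G : SimpleGraph V} {S : Set V} (hS : ∀ s ∈ S, ∀ x, ¬ G.Adj s x)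
    {v : V} (hv : ZFForced G S v) : v ∈ S := by
  induction hv with
  | init v hv => exact hv
  | force u w hadj hu hall ihu ihall => exact absurd hadj (hS u ihu w)

lemma zf_confine {G : SimpleGraph V} {S C : Set V}
    (hC : ∀ p ∈ C, ∀ q, G.Adj p q → q ∈ C) :
    ∀ {v : V}, ZFForced G S v → v ∈ C → ZFForced G (S ∩ C) v := by
  intro v hv
  induction hv with
  | init v hv => exact fun hvC => ZFForced.init v ⟨hv, hvC⟩
  | force u w hadj hu hall ihu ihall =>
    intro hwC
    have huC : u ∈ C := hC w hwC u hadj.symm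
    exact ZFForced.force u w hadj (ihu huC) (fun x hx hxw => ihall x hx hxw (hC u huC x hx))

lemma univ_zfs (G : SimpleGraph V) [Fintype V] :
    IsZeroForcingSet G ↑(Finset.univ : Finset V) :=
  fun v => ZFForced.init v (by simp)

lemma zfNumber_set_nonempty (G : SimpleGraph V) [Fintype V] :
    {k | ∃ S : Finset V, IsZeroForcingSet G ↑S ∧ S.card = k}.Nonempty :=
  ⟨_, Finset.univ, univ_zfs G, rfl⟩

lemma exists_min_zfs (G : SimpleGraph V) [Fintype V] :
    ∃ S : Finset V, IsZeroForcingSet G ↑S ∧ S.card = zfNumber G :=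
  Nat.sInf_mem (zfNumber_set_nonempty G)

lemma zfNumber_le_of_zfs {G : SimpleGraph V} [Fintype V] {S : Finset V}
    (h : IsZeroForcingSet G ↑S) : zfNumber G ≤ S.card :=
  Nat.sInf_le ⟨S, h, rfl⟩

lemma zfNumber_pos (G : SimpleGraph V) [Fintype V] [Nonempty V] : 0 < zfNumber G := by
  rcases Nat.eq_zero_or_pos (zfNumber G) with h | h
  · exfalso
    obtain ⟨S, hS, hcard⟩ := exists_min_zfs G
    rw [h, Finset.card_eq_zero] at hcard
    subst hcard
    have := zf_no_isolated (S := (↑(∅ : Finset V) : Set V))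
      (by intro s hs; simp at hs) (hS (Classical.arbitrary V))
    simpa using this
  · exact h

lemma zfNumber_add_one_le (G : SimpleGraph V) [Fintype V] (hG : ∃ u v, G.Adj u v) :
    zfNumber G + 1 ≤ Fintype.card V := by
  classical
  obtain ⟨u, v, huv⟩ := hG
  have hzfs : IsZeroForcingSet G ↑(Finset.univ.erase v) := by
    intro x
    by_cases hx : x = v
    · subst hx
      refine ZFForced.force u x huv (ZFForced.init u ?_) (fun y hy hyv => ZFForced.init y ?_)
      · simp [huv.ne]
      · simp [hyv]
    · exact ZFForced.init x (by simp [hx])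
  have h1 := zfNumber_le_of_zfs hzfs
  have h2 : (Finset.univ.erase v).card = Fintype.card V - 1 := by
    rw [Finset.card_erase_of_mem (Finset.mem_univ v), Finset.card_univ]
  have h3 : 0 < Fintype.card V := Fintype.card_pos_iff.mpr ⟨u⟩
  omega

lemma fort_not_forced {G : SimpleGraph V} {F : Finset V} {S : Set V}
    (hF : IsFort G F) (hdisj : ∀ x ∈ F, x ∉ S) {v : V} (hv : ZFForced G S v) : v ∉ F := by
  induction hv with
  | init v hv => exact fun hvF => hdisj v hvF hv
  | force u w hadj hu hall ihu ihall =>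
    intro hwF
    refine hF.2 u ihu ⟨w, ⟨hwF, hadj⟩, fun x hx => ?_⟩
    by_contra hxw
    exact ihall x hx.2 hxw hx.1

lemma exists_fort_avoid {G : SimpleGraph V} [Fintype V] {S : Finset V}
    (h : ¬ IsZeroForcingSet G ↑S) :
    ∃ F : Finset V, IsFort G F ∧ ∀ x ∈ F, ¬ ZFForced G (↑S) x := by
  classical
  refine ⟨Finset.univ.filter (fun v => ¬ ZFForced G (↑S) v), ⟨?_, ?_⟩, ?_⟩
  · rw [IsZeroForcingSet] at h
    push_neg at h
    obtain ⟨v, hv⟩ := h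
    exact ⟨v, by simp [hv]⟩
  · intro v hv hex
    simp only [Finset.mem_filter, Finset.mem_univ, true_and, not_not] at hv
    obtain ⟨u, ⟨huF, huadj⟩, huniq⟩ := hex
    simp only [Finset.mem_filter, Finset.mem_univ, true_and] at huF
    refine huF (ZFForced.force v u huadj hv (fun x hx hxu => ?_))
    by_contra hxf
    exact hxu (huniq x ⟨by simp [hxf], hx⟩)
  · intro x hx
    simpa using (Finset.mem_filter.mp hx).2

lemma isFort_boxProd {G : SimpleGraph V} {G' : SimpleGraph V'} {F : Finset V} {F' : Finset V'}
    (hF : IsFort G F) (hF' : IsFort G' F') : IsFort (G □ G') (F ×ˢ F') := by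
  constructor
  · exact hF.1.product hF'.1
  · rintro ⟨v, v'⟩ hv ⟨⟨u, u'⟩, ⟨huF, hadj⟩, huniq⟩
    rw [Finset.mem_product] at huF
    rw [SimpleGraph.boxProd_adj] at hadj
    rcases hadj with ⟨hGadj, h2⟩ | ⟨hG'adj, h1⟩
    · simp only at h2
      have hvF : v ∉ F := fun hvF => hv (Finset.mem_product.mpr ⟨hvF, h2 ▸ huF.2⟩)
      refine hF.2 v hvF ⟨u, ⟨huF.1, hGadj⟩, fun y hy => ?_⟩
      have := huniq (y, v') ⟨Finset.mem_product.mpr ⟨hy.1, h2 ▸ huF.2⟩,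
        SimpleGraph.boxProd_adj.mpr (Or.inl ⟨hy.2, rfl⟩)⟩
      exact congrArg Prod.fst this
    · simp only at h1
      have hvF' : v' ∉ F' := fun hvF' => hv (Finset.mem_product.mpr ⟨h1 ▸ huF.1, hvF'⟩)
      refine hF'.2 v' hvF' ⟨u', ⟨huF.2, hG'adj⟩, fun y hy => ?_⟩
      have := huniq (v, y) ⟨Finset.mem_product.mpr ⟨h1 ▸ huF.1, hy.1⟩,
        SimpleGraph.boxProd_adj.mpr (Or.inr ⟨hy.2, rfl⟩)⟩
      exact congrArg Prod.snd this

lemma zf_map {W : Type*} {G : SimpleGraph V} {H : SimpleGraph W} (e : G ≃g H) {S : Set V}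
    {v : V} (hv : ZFForced G S v) : ZFForced H (⇑e '' S) (e v) := by
  induction hv with
  | init v hv => exact ZFForced.init _ ⟨v, hv, rfl⟩
  | force u w hadj hu hall ihu ihall =>
    refine ZFForced.force (e u) (e w) (e.map_adj_iff.mpr hadj) ihu ?_
    intro y hy hyw
    have h1 : e (e.symm y) = y := e.toEquiv.apply_symm_apply y
    have hadj' : G.Adj u (e.symm y) := by
      rw [← e.map_adj_iff, h1]
      exact hy
    have hne : e.symm y ≠ w := by
      intro hcontra
      exact hyw (by rw [← h1, hcontra])
    have := ihall (e.symm y) hadj' hne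
    rwa [h1] at this

lemma zfNumber_iso_le {W : Type*} [Fintype V] [Fintype W] {G : SimpleGraph V}
    {H : SimpleGraph W} (e : G ≃g H) : zfNumber H ≤ zfNumber G := by
  classical
  obtain ⟨S, hS, hcard⟩ := exists_min_zfs G
  have hzfs : IsZeroForcingSet H ↑(S.image e) := by
    intro w
    have := zf_map e (hS (e.symm w))
    have h1 : e (e.symm w) = w := e.toEquiv.apply_symm_apply w
    rw [h1] at this
    refine zf_trans ?_ this
    · intro x hx
      exact ZFForced.init x (by simpa [Finset.coe_image] using hx)
  have h2 := zfNumber_le_of_zfs hzfs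
  have h3 : (S.image ⇑e).card = S.card := Finset.card_image_of_injective _ e.injective
  rwa [h3, hcard] at h2

lemma zfNumber_eq_of_iso {W : Type*} [Fintype V] [Fintype W] {G : SimpleGraph V}
    {H : SimpleGraph W} (e : G ≃g H) : zfNumber G = zfNumber H :=
  le_antisymm (zfNumber_iso_le e.symm) (zfNumber_iso_le e)

end Aux

section Main

variable {V : Type*} {V' : Type*} [Fintype V] [Fintype V'] [DecidableEq V] [DecidableEq V']

lemma key_split {G : SimpleGraph V} {G' : SimpleGraph V'}
    {T A : Finset (V × V')} (hT : IsZeroForcingSet (G □ G') ↑T) (hA : A ⊆ T)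
    (h1 : ¬ IsZeroForcingSet G ↑(A.image Prod.fst))
    (h2 : ¬ IsZeroForcingSet G' ↑((T \ A).image Prod.snd)) : False := by
  classical
  obtain ⟨F, hF, hFav⟩ := exists_fort_avoid h1
  obtain ⟨F', hF', hF'av⟩ := exists_fort_avoid h2
  have hfort := isFort_boxProd hF hF' (G := G) (G' := G')
  have hdisj : ∀ x ∈ F ×ˢ F', x ∉ (↑T : Set (V × V')) := by
    rintro ⟨x, x'⟩ hx hxT
    rw [Finset.mem_product] at hx
    rw [Finset.mem_coe] at hxT
    by_cases hxA : (x, x') ∈ A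
    · exact hFav x hx.1 (ZFForced.init x
        (Finset.mem_coe.mpr (Finset.mem_image.mpr ⟨(x, x'), hxA, rfl⟩)))
    · exact hF'av x' hx.2 (ZFForced.init x'
        (Finset.mem_coe.mpr (Finset.mem_image.mpr ⟨(x, x'), Finset.mem_sdiff.mpr ⟨hxT, hxA⟩, rfl⟩)))
  obtain ⟨p, hp⟩ := hfort.1
  exact fort_not_forced hfort hdisj (hT p) hp

lemma proj_fst_zfs {G : SimpleGraph V} {G' : SimpleGraph V'}
    {T A : Finset (V × V')} (hT : IsZeroForcingSet (G □ G') ↑T)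
    (hTcard : T.card = zfNumber G + zfNumber G' - 1) (hZ' : 0 < zfNumber G')
    (hA : A ⊆ T) (hAcard : A.card = zfNumber G) :
    IsZeroForcingSet G ↑(A.image Prod.fst) := by
  classical
  by_contra h1
  refine key_split hT hA h1 (fun h2 => ?_)
  have h3 := zfNumber_le_of_zfs h2
  have h4 : ((T \ A).image Prod.snd).card ≤ (T \ A).card := Finset.card_image_le
  have h5 : (T \ A).card = T.card - A.card := Finset.card_sdiff_of_subset hA
  omega

lemma proj_snd_zfs {G : SimpleGraph V} {G' : SimpleGraph V'}
    {T B : Finset (V × V')} (hT : IsZeroForcingSet (G □ G') ↑T)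
    (hTcard : T.card = zfNumber G + zfNumber G' - 1) (hZ : 0 < zfNumber G)
    (hB : B ⊆ T) (hBcard : B.card = zfNumber G') :
    IsZeroForcingSet G' ↑(B.image Prod.snd) := by
  classical
  by_contra h2
  refine key_split (A := T \ B) hT Finset.sdiff_subset (fun h1 => ?_) ?_
  · have h3 := zfNumber_le_of_zfs h1
    have h4 : ((T \ B).image Prod.fst).card ≤ (T \ B).card := Finset.card_image_le
    have h5 : (T \ B).card = T.card - B.card := Finset.card_sdiff_of_subset hB
    omega
  · rwa [_root_.sdiff_sdiff_eq_self hB]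

lemma exists_T {G : SimpleGraph V} {G' : SimpleGraph V'}
    (hG : ∃ u v, G.Adj u v) (hG' : ∃ u v, G'.Adj u v)
    (hlt : zfNumber (G □ G') < zfNumber G + zfNumber G') :
    ∃ T : Finset (V × V'), IsZeroForcingSet (G □ G') ↑T ∧
      T.card = zfNumber G + zfNumber G' - 1 := by
  classical
  obtain ⟨S, hS, hcard⟩ := exists_min_zfs (G □ G')
  obtain ⟨u, v, huv⟩ := hG
  obtain ⟨u', v', huv'⟩ := hG'
  have hn : 2 ≤ Fintype.card V :=
    Fintype.one_lt_card_iff_nontrivial.mpr ⟨⟨u, v, huv.ne⟩⟩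
  have hn' : 2 ≤ Fintype.card V' :=
    Fintype.one_lt_card_iff_nontrivial.mpr ⟨⟨u', v', huv'.ne⟩⟩
  have hZ := zfNumber_add_one_le G ⟨u, v, huv⟩
  have hZ' := zfNumber_add_one_le G' ⟨u', v', huv'⟩
  have hmul : Fintype.card V + Fintype.card V' ≤ Fintype.card V * Fintype.card V' :=
    Nat.add_le_mul hn hn'
  have h1 : S.card ≤ zfNumber G + zfNumber G' - 1 := by omega
  have h2 : zfNumber G + zfNumber G' - 1 ≤ Fintype.card (V × V') := by
    rw [Fintype.card_prod]
    omega
  obtain ⟨T, hST, hTcard⟩ := Finset.exists_superset_card_eq h1 h2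
  exact ⟨T, fun x => zf_mono (Finset.coe_subset.mpr hST) (hS x), hTcard⟩


lemma case_one {G : SimpleGraph V} {G' : SimpleGraph V'}
    (hG : ∃ u v, G.Adj u v) (hG' : ∃ u v, G'.Adj u v) (hZ'1 : zfNumber G' = 1)
    (hlt : zfNumber (G □ G') < zfNumber G + zfNumber G') : False := by
  classical
  obtain ⟨T, hT, hTcard⟩ := exists_T hG hG' hlt
  obtain ⟨gu, gv, hgadj⟩ := hG
  obtain ⟨b1, b2, hb12⟩ := hG'
  have hne1 : Nonempty V := ⟨gu⟩
  have hne2 : Nonempty V' := ⟨b1⟩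
  have hZpos : 0 < zfNumber G := zfNumber_pos G
  have hZ'pos : 0 < zfNumber G' := by omega
  have hTZ : T.card = zfNumber G := by omega
  have hPz : IsZeroForcingSet G ↑(T.image Prod.fst) :=
    proj_fst_zfs hT hTcard hZ'pos (Finset.Subset.refl T) hTZ
  have hPl := zfNumber_le_of_zfs hPz
  have hPcard : (T.image Prod.fst).card = T.card :=
    le_antisymm Finset.card_image_le (by omega)
  have hinj : Set.InjOn Prod.fst (↑T : Set (V × V')) := Finset.card_image_iff.mp hPcard
  have hKt : ∀ t ∈ T, IsZeroForcingSet G' {t.2} := by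
    intro t ht
    have hB : ({t} : Finset (V × V')) ⊆ T := Finset.singleton_subset_iff.mpr ht
    have := proj_snd_zfs hT hTcard hZpos hB (by simp [hZ'1])
    simpa using this
  set C : Set (V × V') := {p | ∃ a, G.Adj p.1 a} with hCdef
  have hCclosed : ∀ p ∈ C, ∀ q, (G □ G').Adj p q → q ∈ C := by
    rintro p ⟨a, ha⟩ q hq
    rw [SimpleGraph.boxProd_adj] at hq
    rcases hq with ⟨h1, h2⟩ | ⟨h1, h2⟩
    · exact ⟨p.1, h1.symm⟩
    · exact ⟨a, h2 ▸ ha⟩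
  have hstall : ∀ v, ZFForced (G □ G') (↑T ∩ C) v → v ∈ (↑T ∩ C : Set (V × V')) := by
    intro v hv
    induction hv with
    | init v hv => exact hv
    | force u w hadj hu hall ihu ihall =>
      exfalso
      obtain ⟨huT, a, ha⟩ := ihu
      have huT' : u ∈ T := Finset.mem_coe.mp huT
      have hK := hKt u huT'
      have hbex : ∃ b, G'.Adj u.2 b := by
        by_contra hiso
        push_neg at hiso
        have hS0 : ∀ s ∈ ({u.2} : Set V'), ∀ x, ¬ G'.Adj s x := by
          intro s hs x
          rw [Set.mem_singleton_iff] at hs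
          subst hs
          exact hiso x
        have e1 := zf_no_isolated hS0 (hK b1)
        have e2 := zf_no_isolated hS0 (hK b2)
        rw [Set.mem_singleton_iff] at e1 e2
        exact hb12.ne (e1.trans e2.symm)
      obtain ⟨b, hbu⟩ := hbex
      have hw : w = (u.1, b) := by
        by_contra hne
        have hx := ihall (u.1, b)
          (SimpleGraph.boxProd_adj.mpr (Or.inr ⟨hbu, rfl⟩)) (Ne.symm hne)
        have heq : ((u.1, b) : V × V') = u := hinj hx.1 huT rfl
        exact hbu.ne' (congrArg Prod.snd heq)
      have hhoriz : ∀ c, G.Adj u.1 c → (c, u.2) ∈ T := by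
        intro c hc
        have hne : ((c, u.2) : V × V') ≠ w := by
          rw [hw]
          intro h
          exact hc.ne' (congrArg Prod.fst h)
        have := ihall (c, u.2) (SimpleGraph.boxProd_adj.mpr (Or.inl ⟨hc, rfl⟩)) hne
        exact Finset.mem_coe.mp this.1
      set P : Finset V := T.image Prod.fst with hPdef
      have haP : a ∈ P := Finset.mem_image.mpr ⟨(a, u.2), hhoriz a ha, rfl⟩
      have hWz : IsZeroForcingSet G ↑(P.erase a) := by
        intro z
        refine zf_trans ?_ (hPz z)
        intro y hy
        by_cases hya : y = a
        · subst hya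
          refine ZFForced.force u.1 y ha (ZFForced.init u.1 ?_)
            (fun x hx hxa => ZFForced.init x ?_)
          · simp only [Finset.mem_coe, Finset.mem_erase]
            exact ⟨ha.ne, Finset.mem_image.mpr ⟨u, huT', rfl⟩⟩
          · simp only [Finset.mem_coe, Finset.mem_erase]
            exact ⟨hxa, Finset.mem_image.mpr ⟨(x, u.2), hhoriz x hx, rfl⟩⟩
        · refine ZFForced.init y ?_
          simp only [Finset.mem_coe, Finset.mem_erase]
          exact ⟨hya, Finset.mem_coe.mp hy⟩
      have h6 := zfNumber_le_of_zfs hWz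
      have h7 : (P.erase a).card = P.card - 1 := Finset.card_erase_of_mem haP
      have h8 : P.card = T.card := hPcard
      omega
  have hmem : ∀ y : V', (gu, y) ∈ T := by
    intro y
    have hyC : ((gu, y) : V × V') ∈ C := ⟨gv, hgadj⟩
    have := hstall _ (zf_confine hCclosed (hT (gu, y)) hyC)
    exact Finset.mem_coe.mp this.1
  have heq := hinj (Finset.mem_coe.mpr (hmem b1)) (Finset.mem_coe.mpr (hmem b2)) rfl
  exact hb12.ne (congrArg Prod.snd heq)

lemma case_both {G : SimpleGraph V} {G' : SimpleGraph V'}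
    (hG : ∃ u v, G.Adj u v) (hG' : ∃ u v, G'.Adj u v)
    (hZ2 : 2 ≤ zfNumber G) (hZ'2 : 2 ≤ zfNumber G')
    (hlt : zfNumber (G □ G') < zfNumber G + zfNumber G') : False := by
  classical
  obtain ⟨T, hT, hTcard⟩ := exists_T hG hG' hlt
  obtain ⟨g1, g2, hg⟩ := hG
  obtain ⟨b1, b2, hb⟩ := hG'
  have hinj1 : Set.InjOn Prod.fst (↑T : Set (V × V')) := by
    intro p hp q hq hfst
    by_contra hne
    have hpair : ({p, q} : Finset (V × V')) ⊆ T := by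
      intro x hx
      rcases Finset.mem_insert.mp hx with rfl | hx
      · exact Finset.mem_coe.mp hp
      · rw [Finset.mem_singleton] at hx
        subst hx
        exact Finset.mem_coe.mp hq
    have hpc : ({p, q} : Finset (V × V')).card = 2 := Finset.card_pair hne
    obtain ⟨A, hsub, hAT, hAcard⟩ := Finset.exists_subsuperset_card_eq
      (n := zfNumber G) hpair (by omega) (by omega)
    have hz := proj_fst_zfs hT hTcard (by omega) hAT hAcard
    have hsubset : A.image Prod.fst ⊆ (A.erase p).image Prod.fst := by
      intro y hy
      obtain ⟨x, hxA, rfl⟩ := Finset.mem_image.mp hy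
      by_cases hxp : x = p
      · subst hxp
        exact Finset.mem_image.mpr ⟨q, Finset.mem_erase.mpr
          ⟨fun h => hne h.symm, hsub (by simp)⟩, hfst.symm⟩
      · exact Finset.mem_image.mpr ⟨x, Finset.mem_erase.mpr ⟨hxp, hxA⟩, rfl⟩
    have h1 := zfNumber_le_of_zfs hz
    have h2 : (A.image Prod.fst).card ≤ (A.erase p).card :=
      le_trans (Finset.card_le_card hsubset) Finset.card_image_le
    have h3 : (A.erase p).card = A.card - 1 := Finset.card_erase_of_mem (hsub (by simp))
    omega
  have hinj2 : Set.InjOn Prod.snd (↑T : Set (V × V')) := by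
    intro p hp q hq hsnd
    by_contra hne
    have hpair : ({p, q} : Finset (V × V')) ⊆ T := by
      intro x hx
      rcases Finset.mem_insert.mp hx with rfl | hx
      · exact Finset.mem_coe.mp hp
      · rw [Finset.mem_singleton] at hx
        subst hx
        exact Finset.mem_coe.mp hq
    have hpc : ({p, q} : Finset (V × V')).card = 2 := Finset.card_pair hne
    obtain ⟨B, hsub, hBT, hBcard⟩ := Finset.exists_subsuperset_card_eq
      (n := zfNumber G') hpair (by omega) (by omega)
    have hz := proj_snd_zfs hT hTcard (by omega) hBT hBcard
    have hsubset : B.image Prod.snd ⊆ (B.erase p).image Prod.snd := by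
      intro y hy
      obtain ⟨x, hxB, rfl⟩ := Finset.mem_image.mp hy
      by_cases hxp : x = p
      · subst hxp
        exact Finset.mem_image.mpr ⟨q, Finset.mem_erase.mpr
          ⟨fun h => hne h.symm, hsub (by simp)⟩, hsnd.symm⟩
      · exact Finset.mem_image.mpr ⟨x, Finset.mem_erase.mpr ⟨hxp, hxB⟩, rfl⟩
    have h1 := zfNumber_le_of_zfs hz
    have h2 : (B.image Prod.snd).card ≤ (B.erase p).card :=
      le_trans (Finset.card_le_card hsubset) Finset.card_image_le
    have h3 : (B.erase p).card = B.card - 1 := Finset.card_erase_of_mem (hsub (by simp))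
    omega
  set C : Set (V × V') := {p | (∃ a, G.Adj p.1 a) ∧ (∃ b, G'.Adj p.2 b)} with hCdef
  have hCclosed : ∀ p ∈ C, ∀ q, (G □ G').Adj p q → q ∈ C := by
    rintro p ⟨⟨a, ha⟩, ⟨b, hbp⟩⟩ q hq
    rw [SimpleGraph.boxProd_adj] at hq
    rcases hq with ⟨h1, h2⟩ | ⟨h1, h2⟩
    · exact ⟨⟨p.1, h1.symm⟩, ⟨b, h2 ▸ hbp⟩⟩
    · exact ⟨⟨a, h2 ▸ ha⟩, ⟨p.2, h1.symm⟩⟩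
  have hstall : ∀ v, ZFForced (G □ G') (↑T ∩ C) v → v ∈ (↑T ∩ C : Set (V × V')) := by
    intro v hv
    induction hv with
    | init v hv => exact hv
    | force u w hadj hu hall ihu ihall =>
      exfalso
      obtain ⟨huT, ⟨a, ha⟩, ⟨b, hb'⟩⟩ := ihu
      have hx1 : ((a, u.2) : V × V') ≠ (u.1, b) := by
        intro h
        exact ha.ne' (congrArg Prod.fst h)
      have key : ∀ x : V × V', (G □ G').Adj u x → x ≠ w → False := by
        intro x hxadj hxw
        have hx := ihall x hxadj hxw
        rw [SimpleGraph.boxProd_adj] at hxadj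
        rcases hxadj with ⟨h1, h2⟩ | ⟨h1, h2⟩
        · have heq : x = u := hinj2 hx.1 huT h2.symm
          rw [heq] at h1
          exact G.irrefl h1
        · have heq : x = u := hinj1 hx.1 huT h2.symm
          rw [heq] at h1
          exact G'.irrefl h1
      rcases eq_or_ne ((a, u.2) : V × V') w with h1 | h1
      · refine key (u.1, b) (SimpleGraph.boxProd_adj.mpr (Or.inr ⟨hb', rfl⟩)) ?_
        rw [← h1]
        exact Ne.symm hx1
      · exact key (a, u.2) (SimpleGraph.boxProd_adj.mpr (Or.inl ⟨ha, rfl⟩)) h1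
  have hmem : ∀ p : V × V', p ∈ C → p ∈ T := fun p hp =>
    Finset.mem_coe.mp (hstall p (zf_confine hCclosed (hT p) hp)).1
  have hm1 : ((g1, b1) : V × V') ∈ T := hmem _ ⟨⟨g2, hg⟩, ⟨b2, hb⟩⟩
  have hm2 : ((g2, b1) : V × V') ∈ T := hmem _ ⟨⟨g1, hg.symm⟩, ⟨b2, hb⟩⟩
  have heq := hinj2 (Finset.mem_coe.mpr hm1) (Finset.mem_coe.mpr hm2) rfl
  exact hg.ne (congrArg Prod.fst heq)

end Main

/-- if `G` and `G'` each contain an edge, then `Z(G □ G') ≥ Z(G) + Z(G')`. -/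
theorem zfNumber_boxProd_ge_add {V V' : Type*} [Fintype V] [Fintype V']
    (G : SimpleGraph V) (G' : SimpleGraph V')
    (hG : ∃ u v, G.Adj u v) (hG' : ∃ u v, G'.Adj u v) :
    zfNumber G + zfNumber G' ≤ zfNumber (G □ G') := by
  classical
  by_contra hcon
  push_neg at hcon
  obtain ⟨gu, gv, hg⟩ := hG
  obtain ⟨hu', hv', hh⟩ := hG'
  have hne1 : Nonempty V := ⟨gu⟩
  have hne2 : Nonempty V' := ⟨hu'⟩
  have hZpos : 0 < zfNumber G := zfNumber_pos G
  have hZ'pos : 0 < zfNumber G' := zfNumber_pos G'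
  by_cases hz' : zfNumber G' = 1
  · exact case_one ⟨gu, gv, hg⟩ ⟨hu', hv', hh⟩ hz' hcon
  · by_cases hz : zfNumber G = 1
    · have hcomm : zfNumber (G' □ G) = zfNumber (G □ G') :=
        zfNumber_eq_of_iso (SimpleGraph.boxProdComm G' G)
      exact case_one ⟨hu', hv', hh⟩ ⟨gu, gv, hg⟩ hz (by omega)
    · exact case_both ⟨gu, gv, hg⟩ ⟨hu', hv', hh⟩ (by omega) (by omega) hcon
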